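/- The cosine law is an involution: if cos y_i = (cos x_i + cos x_j cos x_k)/(sin x_j sin x_k) for all {i,j,k}={1,2,3}, then cos x_i = (cos y_i − cos y_j cos y_k)/(sin y_j sin y_k). -/

import Mathlib

open Real Set

/-! With `aᵢ = cos xᵢ`, `sᵢ = sin xᵢ` and `D = 1 - a₁² - a₂² - a₃² - 2a₁a₂a₃`, the cosine law gives
`sin² y₁ = D / (s₂s₃)²`, so (all sines being positive) `sin y₁ · s₂s₃ = √D` and cyclically.
Hence `sin y₂ sin y₃ = D / (s₁²s₂s₃)`, while `cos y₁ - cos y₂ cos y₃` expands to `a₁D / (s₁²s₂s₃)`;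
their quotient is `a₁`. -/

/-- The determinant of the Gram matrix `!![1, -c, -b; -c, 1, -a; -b, -a, 1]`. -/
def gramDet (a b c : ℝ) : ℝ := 1 - a ^ 2 - b ^ 2 - c ^ 2 - 2 * a * b * c

lemma gramDet_rotate (a b c : ℝ) : gramDet a b c = gramDet b c a := by
  unfold gramDet; ring

lemma sin_mul_sin_mul_sin_eq_sqrt_gramDet {x₁ x₂ x₃ y : ℝ} (hx₂ : 0 < sin x₂) (hx₃ : 0 < sin x₃)
    (hy : 0 < sin y) (h : cos y = (cos x₁ + cos x₂ * cos x₃) / (sin x₂ * sin x₃)) :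
    sin y * (sin x₂ * sin x₃) = √(gramDet (cos x₁) (cos x₂) (cos x₃)) := by
  have hcos : cos y * (sin x₂ * sin x₃) = cos x₁ + cos x₂ * cos x₃ := by
    rw [h]; field_simp
  rw [← Real.sqrt_sq (by positivity : 0 ≤ sin y * (sin x₂ * sin x₃)), gramDet]
  congr 1
  linear_combination (sin x₂ * sin x₃) ^ 2 * sin_sq_add_cos_sq y - (cos x₁ + cos x₂ * cos x₃ +
    cos y * (sin x₂ * sin x₃)) * hcos + sin x₃ ^ 2 * sin_sq_add_cos_sq x₂ +
    (1 - cos x₂ ^ 2) * sin_sq_add_cos_sq x₃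

lemma cos_sub_cos_mul_cos_of_cosine_law {x₁ x₂ x₃ : ℝ} (hx₁ : sin x₁ ≠ 0) (hx₂ : sin x₂ ≠ 0)
    (hx₃ : sin x₃ ≠ 0) :
    (cos x₁ + cos x₂ * cos x₃) / (sin x₂ * sin x₃) -
        (cos x₂ + cos x₃ * cos x₁) / (sin x₃ * sin x₁) *
        ((cos x₃ + cos x₁ * cos x₂) / (sin x₁ * sin x₂)) =
      cos x₁ * gramDet (cos x₁) (cos x₂) (cos x₃) / (sin x₁ ^ 2 * sin x₂ * sin x₃) := by
  rw [gramDet]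
  field_simp
  linear_combination (cos x₁ + cos x₂ * cos x₃) * sin_sq_add_cos_sq x₁

lemma cos_eq_of_cosine_law {x₁ x₂ x₃ y₁ y₂ y₃ : ℝ}
    (hx₁ : 0 < sin x₁) (hx₂ : 0 < sin x₂) (hx₃ : 0 < sin x₃)
    (hy₂ : 0 < sin y₂) (hy₃ : 0 < sin y₃)
    (h₁ : cos y₁ = (cos x₁ + cos x₂ * cos x₃) / (sin x₂ * sin x₃))
    (h₂ : cos y₂ = (cos x₂ + cos x₃ * cos x₁) / (sin x₃ * sin x₁))
    (h₃ : cos y₃ = (cos x₃ + cos x₁ * cos x₂) / (sin x₁ * sin x₂)) :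
    cos x₁ = (cos y₁ - cos y₂ * cos y₃) / (sin y₂ * sin y₃) := by
  have hD₂ : sin y₂ * (sin x₃ * sin x₁) = √(gramDet (cos x₁) (cos x₂) (cos x₃)) := by
    rw [gramDet_rotate (cos x₁)]
    exact sin_mul_sin_mul_sin_eq_sqrt_gramDet hx₃ hx₁ hy₂ h₂
  have hD₃ : sin y₃ * (sin x₁ * sin x₂) = √(gramDet (cos x₁) (cos x₂) (cos x₃)) := by
    rw [gramDet_rotate (cos x₁), gramDet_rotate (cos x₂)]
    exact sin_mul_sin_mul_sin_eq_sqrt_gramDet hx₁ hx₂ hy₃ h₃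
  have hD : 0 < gramDet (cos x₁) (cos x₂) (cos x₃) := Real.sqrt_pos.mp (hD₂ ▸ by positivity)
  have hsin : sin y₂ * sin y₃ =
      gramDet (cos x₁) (cos x₂) (cos x₃) / (sin x₁ ^ 2 * sin x₂ * sin x₃) := by
    rw [eq_div_iff (by positivity), ← Real.mul_self_sqrt hD.le]
    calc sin y₂ * sin y₃ * (sin x₁ ^ 2 * sin x₂ * sin x₃)
        _ = sin y₂ * (sin x₃ * sin x₁) * (sin y₃ * (sin x₁ * sin x₂)) := by ring
        _ = _ := by rw [hD₂, hD₃]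
  rw [hsin, h₁, h₂, h₃, cos_sub_cos_mul_cos_of_cosine_law hx₁.ne' hx₂.ne' hx₃.ne']
  field_simp [hD.ne']

theorem cosine_law_involution (x1 x2 x3 y1 y2 y3 : ℝ)
    (hx1 : x1 ∈ Ioo 0 π) (hx2 : x2 ∈ Ioo 0 π) (hx3 : x3 ∈ Ioo 0 π)
    (hy1 : y1 ∈ Ioo 0 π) (hy2 : y2 ∈ Ioo 0 π) (hy3 : y3 ∈ Ioo 0 π)
    (h1 : cos y1 = (cos x1 + cos x2 * cos x3) / (sin x2 * sin x3))
    (h2 : cos y2 = (cos x2 + cos x3 * cos x1) / (sin x3 * sin x1))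
    (h3 : cos y3 = (cos x3 + cos x1 * cos x2) / (sin x1 * sin x2)) :
    cos x1 = (cos y1 - cos y2 * cos y3) / (sin y2 * sin y3) ∧
    cos x2 = (cos y2 - cos y3 * cos y1) / (sin y3 * sin y1) ∧
    cos x3 = (cos y3 - cos y1 * cos y2) / (sin y1 * sin y2) := by
  have hsx1 := sin_pos_of_pos_of_lt_pi hx1.1 hx1.2
  have hsx2 := sin_pos_of_pos_of_lt_pi hx2.1 hx2.2
  have hsx3 := sin_pos_of_pos_of_lt_pi hx3.1 hx3.2
  have hsy1 := sin_pos_of_pos_of_lt_pi hy1.1 hy1.2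
  have hsy2 := sin_pos_of_pos_of_lt_pi hy2.1 hy2.2
  have hsy3 := sin_pos_of_pos_of_lt_pi hy3.1 hy3.2
  exact ⟨cos_eq_of_cosine_law hsx1 hsx2 hsx3 hsy2 hsy3 h1 h2 h3,
    cos_eq_of_cosine_law hsx2 hsx3 hsx1 hsy3 hsy1 h2 h3 h1,
    cos_eq_of_cosine_law hsx3 hsx1 hsx2 hsy1 hsy2 h3 h1 h2⟩
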